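/- arXiv:2206.05610 — 2 statements merged into one kernel-verified Lean document; each statement's English description precedes it below -/
import Mathlib

section
/- For every integer n ≥ 0, the Fourier coefficient of 1/cos(x/4) satisfies a_n = (8√2/π) ∑_{k=n+1}^{∞} (-1)^k (1/(4k-1) - 1/(4k-3)), where the tail series converges. -/
open Real

/-- The Fourier cosine coefficients of F(x) = 1/cos(x/4) on [-π, π]. -/
noncomputable def fourierA (n : ℕ) : ℝ :=
  (8 / π) * ∫ t in (0:ℝ)..(π / 4), Real.cos (4 * n * t) / Real.cos t

/-- The tail term of the series, for k = j + n + 1 ≥ n + 1. -/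
noncomputable def tailTerm (n j : ℕ) : ℝ :=
  (-1 : ℝ) ^ (j + n + 1)
    * (1 / (4 * ((j : ℝ) + n + 1) - 1) - 1 / (4 * ((j : ℝ) + n + 1) - 3))

/-!
With `I n = ∫ t in 0..π/4, cos (4 n t) / cos t`, the identity
`cos ((s + 4) t) - cos (s t) = 2 cos t (cos ((s + 3) t) - cos ((s + 1) t))` clears the
denominator in `I (n + 1) - I n`, which then integrates to `-√2` times the `(n + 1)`-st term of
the series. Since `I n → 0` (Riemann–Lebesgue, by one integration by parts: `1 / cos` is `C¹` on
`[0, π/4]`), `I n` is the sum of the telescoping tail.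
-/

open Filter MeasureTheory Set Topology

theorem hasSum_nat_add_of_sub_succ_eq {G : Type*} [AddCommGroup G] [TopologicalSpace G]
    [IsTopologicalAddGroup G] [T2Space G] {f u : ℕ → G} (hu : Summable u)
    (hf : Tendsto f atTop (𝓝 0)) (hfu : ∀ n, f n - f (n + 1) = u n) (n : ℕ) :
    HasSum (fun j => u (j + n)) (f n) := by
  refine ((summable_nat_add_iff n).2 hu).hasSum_iff_tendsto_nat.2 ?_
  have hpartial : ∀ N, ∑ j ∈ Finset.range N, u (j + n) = f n - f (N + n) := fun N => by
    simpa [← hfu, add_right_comm] using Finset.sum_range_sub' (fun j => f (j + n)) N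
  simp only [hpartial]
  simpa using tendsto_const_nhds.sub (hf.comp (tendsto_add_atTop_nat n))

theorem abs_integral_mul_cos_le {g g' : ℝ → ℝ} {a b c : ℝ} (hab : a ≤ b) (hc : 0 < c)
    (hg : ∀ x ∈ uIcc a b, HasDerivAt g (g' x) x) (hg' : IntervalIntegrable g' volume a b) :
    |∫ x in a..b, g x * cos (c * x)| ≤ (|g a| + |g b| + ∫ x in a..b, |g' x|) / c := by
  have hv : ∀ x ∈ uIcc a b, HasDerivAt (fun y => sin (c * y) / c) (cos (c * x)) x :=
    fun x _ => by simpa [hc.ne'] using (((hasDerivAt_id x).const_mul c).sin).div_const c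
  have hcos : IntervalIntegrable (fun x => cos (c * x)) volume a b :=
    (by fun_prop : Continuous fun x => cos (c * x)).intervalIntegrable a b
  have hsin_le : ∀ x, |sin (c * x) / c| ≤ 1 / c := fun x => by
    rw [abs_div, abs_of_pos hc]
    gcongr
    exact abs_sin_le_one _
  have hrem : |∫ x in a..b, g' x * (sin (c * x) / c)| ≤ (∫ x in a..b, |g' x|) / c := by
    calc |∫ x in a..b, g' x * (sin (c * x) / c)|
        ≤ ∫ x in a..b, |g' x * (sin (c * x) / c)| :=
          intervalIntegral.abs_integral_le_integral_abs hab
      _ ≤ ∫ x in a..b, |g' x| * (1 / c) := by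
          refine intervalIntegral.integral_mono_on hab ?_ ?_ fun x _ => ?_
          · exact (hg'.mul_continuousOn (by fun_prop)).abs
          · exact hg'.abs.mul_const _
          · rw [abs_mul]
            exact mul_le_mul_of_nonneg_left (hsin_le x) (abs_nonneg _)
      _ = (∫ x in a..b, |g' x|) / c := by
          rw [intervalIntegral.integral_mul_const, mul_one_div]
  rw [intervalIntegral.integral_mul_deriv_eq_deriv_mul hg hv hg' hcos]
  have ha := mul_le_mul_of_nonneg_left (hsin_le a) (abs_nonneg (g a))
  have hb := mul_le_mul_of_nonneg_left (hsin_le b) (abs_nonneg (g b))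
  rw [mul_one_div] at ha hb
  calc _ ≤ |g b * (sin (c * b) / c) - g a * (sin (c * a) / c)|
          + |∫ x in a..b, g' x * (sin (c * x) / c)| := abs_sub _ _
    _ ≤ |g b * (sin (c * b) / c)| + |g a * (sin (c * a) / c)|
          + |∫ x in a..b, g' x * (sin (c * x) / c)| := by gcongr; exact abs_sub _ _
    _ ≤ _ := by
        rw [abs_mul, abs_mul, add_div, add_div]
        linarith

theorem tendsto_integral_mul_cos_atTop {g g' : ℝ → ℝ} {a b : ℝ} (hab : a ≤ b)
    (hg : ∀ x ∈ uIcc a b, HasDerivAt g (g' x) x) (hg' : IntervalIntegrable g' volume a b) :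
    Tendsto (fun c => ∫ x in a..b, g x * cos (c * x)) atTop (𝓝 0) := by
  refine squeeze_zero_norm' ?_
    ((tendsto_const_nhds (x := |g a| + |g b| + ∫ x in a..b, |g' x|)).div_atTop tendsto_id)
  filter_upwards [eventually_gt_atTop 0] with c hc
  exact abs_integral_mul_cos_le hab hc hg hg'

theorem integral_cos_const_mul {c : ℝ} (hc : c ≠ 0) (a b : ℝ) :
    ∫ x in a..b, cos (c * x) = (sin (c * b) - sin (c * a)) / c := by
  rw [intervalIntegral.integral_comp_mul_left cos hc, integral_cos, smul_eq_mul, inv_mul_eq_div]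

theorem cos_add_four_mul_sub_cos (s t : ℝ) :
    cos ((s + 4) * t) - cos (s * t) = 2 * cos t * (cos ((s + 3) * t) - cos ((s + 1) * t)) := by
  rw [cos_sub_cos, cos_sub_cos,
    show ((s + 4) * t + s * t) / 2 = (s + 2) * t by ring,
    show ((s + 4) * t - s * t) / 2 = 2 * t by ring,
    show ((s + 3) * t + (s + 1) * t) / 2 = (s + 2) * t by ring,
    show ((s + 3) * t - (s + 1) * t) / 2 = t by ring, sin_two_mul]
  ring

theorem abs_tailTerm_zero_le (k : ℕ) : |tailTerm 0 k| ≤ 1 / ((k : ℝ) + 1) ^ 2 := by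
  have hdiff : 1 / (4 * ((k : ℝ) + 1) - 1) - 1 / (4 * ((k : ℝ) + 1) - 3)
      = -(2 / ((4 * k + 1) * (4 * k + 3))) := by
    rw [show 4 * ((k : ℝ) + 1) - 1 = 4 * k + 3 by ring,
      show 4 * ((k : ℝ) + 1) - 3 = 4 * k + 1 by ring]
    field_simp
    ring
  simp only [tailTerm, Nat.cast_zero, add_zero, hdiff, abs_mul, abs_pow, abs_neg, abs_one, one_pow,
    one_mul]
  rw [abs_of_pos (by positivity), div_le_div_iff₀ (by positivity) (by positivity)]
  nlinarith

theorem summable_tailTerm_zero : Summable (tailTerm 0) := by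
  have hp : Summable fun k : ℕ => 1 / ((k : ℝ) + 1) ^ 2 := by
    simpa using (summable_nat_add_iff 1).2 (Real.summable_one_div_nat_pow.2 one_lt_two)
  exact hp.of_norm_bounded abs_tailTerm_zero_le

theorem tailTerm_eq_tailTerm_zero (n j : ℕ) : tailTerm n j = tailTerm 0 (j + n) := by
  simp only [tailTerm]
  push_cast
  ring_nf

theorem cos_pos_of_mem_uIcc_zero_pi_div_four {t : ℝ} (ht : t ∈ uIcc 0 (π / 4)) :
    0 < cos t := by
  rw [uIcc_of_le (by positivity)] at ht
  exact cos_pos_of_mem_Ioo ⟨by linarith [ht.1, pi_pos], by linarith [ht.2, pi_pos]⟩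

theorem intervalIntegrable_cos_mul_div_cos (c : ℝ) :
    IntervalIntegrable (fun t => cos (c * t) / cos t) volume 0 (π / 4) :=
  (ContinuousOn.div (by fun_prop) continuousOn_cos fun _ ht =>
    (cos_pos_of_mem_uIcc_zero_pi_div_four ht).ne').intervalIntegrable

theorem integral_cos_four_nat_add_mul (n : ℕ) {r : ℝ} (hr : 0 < r) :
    ∫ x in (0 : ℝ)..(π / 4), cos ((4 * n + r) * x)
      = (-1) ^ n * sin (r * (π / 4)) / (4 * n + r) := by
  rw [integral_cos_const_mul (by positivity), mul_zero, sin_zero, sub_zero,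
    show (4 * n + r) * (π / 4) = r * (π / 4) + n * π by ring, sin_add_nat_mul_pi]

theorem fourierA_sub_fourierA_succ (n : ℕ) :
    fourierA n - fourierA (n + 1) = 8 * √2 / π * tailTerm 0 n := by
  have hpt : ∀ t ∈ uIcc 0 (π / 4),
      cos (4 * ((n + 1 : ℕ) : ℝ) * t) / cos t - cos (4 * n * t) / cos t
        = 2 * cos ((4 * n + 3) * t) - 2 * cos ((4 * n + 1) * t) := fun t ht => by
    rw [div_sub_div_same, div_eq_iff (cos_pos_of_mem_uIcc_zero_pi_div_four ht).ne', Nat.cast_succ,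
      mul_add_one, cos_add_four_mul_sub_cos]
    ring
  have hcos (r : ℝ) : IntervalIntegrable (fun t => 2 * cos ((4 * n + r) * t)) volume 0 (π / 4) :=
    (by fun_prop : Continuous fun t => 2 * cos ((4 * n + r) * t)).intervalIntegrable _ _
  have hdiff : (∫ t in (0 : ℝ)..(π / 4), cos (4 * ((n + 1 : ℕ) : ℝ) * t) / cos t)
      - ∫ t in (0 : ℝ)..(π / 4), cos (4 * n * t) / cos t
      = √2 * (-1) ^ n * (1 / (4 * n + 3) - 1 / (4 * n + 1)) := by
    rw [← intervalIntegral.integral_sub (intervalIntegrable_cos_mul_div_cos _)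
        (intervalIntegrable_cos_mul_div_cos _), intervalIntegral.integral_congr hpt,
      intervalIntegral.integral_sub (hcos 3) (hcos 1), intervalIntegral.integral_const_mul,
      intervalIntegral.integral_const_mul, integral_cos_four_nat_add_mul n three_pos,
      integral_cos_four_nat_add_mul n one_pos, one_mul, sin_pi_div_four,
      show 3 * (π / 4) = π - π / 4 by ring, sin_pi_sub, sin_pi_div_four]
    ring
  simp only [fourierA, tailTerm, Nat.cast_zero, add_zero]
  rw [← mul_sub, ← neg_sub, hdiff, show 4 * ((n : ℝ) + 1) - 1 = 4 * n + 3 by ring,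
    show 4 * ((n : ℝ) + 1) - 3 = 4 * n + 1 by ring]
  ring

theorem tendsto_fourierA : Tendsto fourierA atTop (𝓝 0) := by
  have hg : ∀ x ∈ uIcc 0 (π / 4), HasDerivAt (fun x => (cos x)⁻¹) (sin x / cos x ^ 2) x :=
    fun x hx => ((hasDerivAt_cos x).inv (cos_pos_of_mem_uIcc_zero_pi_div_four hx).ne').congr_deriv
      (by ring)
  have hg' : IntervalIntegrable (fun x => sin x / cos x ^ 2) volume 0 (π / 4) :=
    (ContinuousOn.div (by fun_prop) (by fun_prop) fun _ ht =>
      pow_ne_zero 2 (cos_pos_of_mem_uIcc_zero_pi_div_four ht).ne').intervalIntegrable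
  have h4n : Tendsto (fun n : ℕ => 4 * (n : ℝ)) atTop atTop :=
    tendsto_natCast_atTop_atTop.const_mul_atTop four_pos
  have hlim := ((tendsto_integral_mul_cos_atTop (by positivity) hg hg').comp h4n).const_mul (8 / π)
  rw [mul_zero] at hlim
  refine hlim.congr fun n => ?_
  rw [Function.comp_apply, fourierA]
  exact congrArg _ (intervalIntegral.integral_congr fun x _ => inv_mul_eq_div _ _)

/-- For every n ≥ 0, the tail series ∑_{k=n+1}^∞ (-1)^k (1/(4k-1) - 1/(4k-3)) converges
and aₙ = (8√2/π) ∑_{k=n+1}^∞ (-1)^k (1/(4k-1) - 1/(4k-3)). -/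
theorem fourier_coeff_tail_series (n : ℕ) :
    Summable (tailTerm n) ∧
      fourierA n = (8 * Real.sqrt 2 / π) * ∑' j : ℕ, tailTerm n j := by
  have hsum : HasSum (fun j => 8 * √2 / π * tailTerm n j) (fourierA n) := by
    simpa only [tailTerm_eq_tailTerm_zero n] using hasSum_nat_add_of_sub_succ_eq
      (summable_tailTerm_zero.mul_left _) tendsto_fourierA fourierA_sub_fourierA_succ n
  refine ⟨((summable_nat_add_iff n).2 summable_tailTerm_zero).congr
    fun j => (tailTerm_eq_tailTerm_zero n j).symm, ?_⟩
  rw [← hsum.tsum_eq, tsum_mul_left]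
end

section
/- π² = 4 ln²(1 + √2) + 8 ∫_{ln(1+√2)}^{∞} arccosh(coth x) dx, where coth x = cosh x / sinh x and arccosh is the inverse hyperbolic cosine; the improper integral converges. -/
/-!
`f x = arcosh (coth x)` is a decreasing involution of `(0, ∞)`, because `cosh (f x) = coth x` and
`sinh (f x) = 1 / sinh x`; its fixed point is `a = arsinh 1 = log (1 + √2)`. The region under the
graph of `f` is symmetric about the diagonal, so it consists of the square `(0, a)²` and two mirror
copies of the region under `f` over `(a, ∞)`: `∫₀^∞ f = a² + 2 ∫ₐ^∞ f`. On the other hand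
`f x = log (1 + e⁻ˣ) - log (1 - e⁻ˣ) = ∑ₖ 2 e^{-(2k+1)x} / (2k+1)`, and termwise integration gives
`∫₀^∞ f = 2 ∑ₖ 1 / (2k+1)² = π² / 4`.
-/

open Real MeasureTheory

/-- The inverse hyperbolic cosine: arccosh y = ln(y + √(y² - 1)) for y ≥ 1. -/
noncomputable def arcosh (y : ℝ) : ℝ := Real.log (y + Real.sqrt (y ^ 2 - 1))

open Set Filter

section Involution

variable {f : ℝ → ℝ}

theorem StrictAntiOn.lt_apply_iff_lt_apply (hanti : StrictAntiOn f (Ioi 0))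
    (hmaps : MapsTo f (Ioi 0) (Ioi 0)) (hinv : LeftInvOn f f (Ioi 0)) {x t : ℝ}
    (hx : 0 < x) (ht : 0 < t) : t < f x ↔ x < f t := by
  rw [← hanti.lt_iff_gt (hmaps hx) ht, hinv hx]

theorem StrictAntiOn.setIntegral_Ioi_eq_setIntegral_Ioo_sub (hanti : StrictAntiOn f (Ioi 0))
    (hmaps : MapsTo f (Ioi 0) (Ioi 0)) (hinv : LeftInvOn f f (Ioi 0)) {a : ℝ} (ha : 0 < a)
    (hfa : f a = a) (hint : IntegrableOn f (Ioi a)) :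
    ∫ x in Ioi a, f x = ∫ t in Ioo 0 a, (f t - a) := by
  have hlevel : ∀ t ∈ Ioi (0 : ℝ), (volume.restrict (Ioi a)).real {x | t < f x} =
      (Ioo 0 a).indicator (fun t => f t - a) t := by
    intro t (ht : 0 < t)
    rw [measureReal_restrict_apply' measurableSet_Ioi]
    rcases lt_or_ge t a with hta | hat
    · have hset : {x | t < f x} ∩ Ioi a = Ioo a (f t) := by
        ext x
        simp only [mem_inter_iff, mem_ofPred_eq, mem_Ioi, mem_Ioo]
        constructor
        · rintro ⟨htx, hax⟩
          exact ⟨hax, (hanti.lt_apply_iff_lt_apply hmaps hinv (ha.trans hax) ht).1 htx⟩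
        · rintro ⟨hax, hxt⟩
          exact ⟨(hanti.lt_apply_iff_lt_apply hmaps hinv (ha.trans hax) ht).2 hxt, hax⟩
      have hat : a < f t := hfa ▸ hanti ht ha hta
      rw [hset, Real.volume_real_Ioo_of_le hat.le, indicator_of_mem (mem_Ioo.2 ⟨ht, hta⟩)]
    · have hset : {x | t < f x} ∩ Ioi a = ∅ := by
        refine eq_empty_of_forall_notMem fun x ⟨htx, (hax : a < x)⟩ => ?_
        have : f x < a := hfa ▸ hanti ha (ha.trans hax) hax
        linarith [mem_ofPred_eq ▸ htx]
      rw [hset, measureReal_empty, indicator_of_notMem fun h => (not_lt.2 hat) h.2]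
  have hnonneg : 0 ≤ᵐ[volume.restrict (Ioi a)] f :=
    (ae_restrict_iff' measurableSet_Ioi).2 <| .of_forall fun x hx =>
      (hmaps (mem_Ioi.2 (ha.trans hx))).le
  rw [hint.integral_eq_integral_meas_lt hnonneg, setIntegral_congr_fun measurableSet_Ioi hlevel,
    integral_indicator measurableSet_Ioo, Measure.restrict_restrict measurableSet_Ioo,
    inter_eq_left.2 Ioo_subset_Ioi_self]

theorem StrictAntiOn.setIntegral_Ioi_zero_eq_sq_add_two_mul (hanti : StrictAntiOn f (Ioi 0))
    (hmaps : MapsTo f (Ioi 0) (Ioi 0)) (hinv : LeftInvOn f f (Ioi 0)) {a : ℝ} (ha : 0 < a)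
    (hfa : f a = a) (hint : IntegrableOn f (Ioi 0)) :
    ∫ x in Ioi 0, f x = a ^ 2 + 2 * ∫ x in Ioi a, f x := by
  have hint_Ioi : IntegrableOn f (Ioi a) := hint.mono_set (Ioi_subset_Ioi ha.le)
  have hint_Ioo : IntegrableOn f (Ioo 0 a) := hint.mono_set Ioo_subset_Ioi_self
  have hsplit : ∫ x in Ioi 0, f x = (∫ x in Ioo 0 a, f x) + ∫ x in Ioi a, f x := by
    rw [← Ioc_union_Ioi_eq_Ioi ha.le, setIntegral_union (Ioc_disjoint_Ioi le_rfl)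
      measurableSet_Ioi (hint.mono_set Ioc_subset_Ioi_self) hint_Ioi,
      integral_Ioc_eq_integral_Ioo]
  have hsquare : ∫ t in Ioo 0 a, (f t - a) = (∫ t in Ioo 0 a, f t) - a ^ 2 := by
    rw [integral_sub hint_Ioo (integrableOn_const (by simp)), setIntegral_const,
      Real.volume_real_Ioo_of_le ha.le, smul_eq_mul]
    ring
  have hmirror := hanti.setIntegral_Ioi_eq_setIntegral_Ioo_sub hmaps hinv ha hfa hint_Ioi
  linarith

end Involution

theorem integrable_and_integral_eq_of_hasSum_of_nonneg {α : Type*} [MeasurableSpace α]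
    {μ : Measure α} {F : ℕ → α → ℝ} {f : α → ℝ} {s : ℝ} (hF : ∀ n, Integrable (F n) μ)
    (hF_nonneg : ∀ n, 0 ≤ᵐ[μ] F n) (hf : ∀ᵐ x ∂μ, HasSum (F · x) (f x))
    (hs : HasSum (fun n => ∫ x, F n x ∂μ) s) :
    Integrable f μ ∧ ∫ x, f x ∂μ = s := by
  have hf_meas : AEStronglyMeasurable f μ :=
    aestronglyMeasurable_of_tendsto_ae atTop
      (fun n => Finset.aestronglyMeasurable_fun_sum _ fun i _ => (hF i).1)
      (hf.mono fun x hx => hx.tendsto_sum_nat)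
  have hF_nonneg' : ∀ᵐ x ∂μ, ∀ n, 0 ≤ F n x := ae_all_iff.2 hF_nonneg
  have hf_nonneg : 0 ≤ᵐ[μ] f := by
    filter_upwards [hf, hF_nonneg'] with x hx h0 using hx.nonneg h0
  have hlintegral : ∫⁻ x, ENNReal.ofReal (f x) ∂μ = ENNReal.ofReal s := by
    calc ∫⁻ x, ENNReal.ofReal (f x) ∂μ = ∫⁻ x, ∑' n, ENNReal.ofReal (F n x) ∂μ := by
          refine lintegral_congr_ae ?_
          filter_upwards [hf, hF_nonneg'] with x hx h0
          rw [← hx.tsum_eq, ENNReal.ofReal_tsum_of_nonneg h0 hx.summable]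
      _ = ∑' n, ENNReal.ofReal (∫ x, F n x ∂μ) := by
          rw [lintegral_tsum fun n => (hF n).aemeasurable.ennreal_ofReal]
          congr 1 with n
          rw [ofReal_integral_eq_lintegral_ofReal (hF n) (hF_nonneg n)]
      _ = ENNReal.ofReal s := by
          rw [← ENNReal.ofReal_tsum_of_nonneg (fun n => integral_nonneg_of_ae (hF_nonneg n))
            hs.summable, hs.tsum_eq]
  refine ⟨⟨hf_meas, ?_⟩, ?_⟩
  · rw [hasFiniteIntegral_iff_ofReal hf_nonneg, hlintegral]
    exact ENNReal.ofReal_lt_top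
  · rw [integral_eq_lintegral_of_nonneg_ae hf_nonneg hf_meas, hlintegral,
      ENNReal.toReal_ofReal (hs.nonneg fun n => integral_nonneg_of_ae (hF_nonneg n))]

theorem hasSum_one_div_odd_sq :
    HasSum (fun k : ℕ => 1 / (2 * (k : ℝ) + 1) ^ 2) (π ^ 2 / 8) := by
  have hodd : Summable (fun k : ℕ => 1 / (((2 * k + 1 : ℕ) : ℝ)) ^ 2) :=
    hasSum_zeta_two.summable.comp_injective (i := fun k : ℕ => 2 * k + 1)
      fun m n h => by simpa using h
  have heven : HasSum (fun k : ℕ => 1 / (((2 * k : ℕ) : ℝ)) ^ 2) (1 / 4 * (π ^ 2 / 6)) := by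
    have hcast : (fun k : ℕ => 1 / (((2 * k : ℕ) : ℝ)) ^ 2) =
        fun k : ℕ => 1 / 4 * (1 / (k : ℝ) ^ 2) := by
      ext k; push_cast; ring
    rw [hcast]
    exact hasSum_zeta_two.mul_left _
  have htotal := hasSum_zeta_two.unique
    (HasSum.even_add_odd (f := fun n : ℕ => 1 / (n : ℝ) ^ 2) heven hodd.hasSum)
  have hcast : (fun k : ℕ => 1 / (((2 * k + 1 : ℕ) : ℝ)) ^ 2) =
      fun k : ℕ => 1 / (2 * (k : ℝ) + 1) ^ 2 := by
    ext k; push_cast; rfl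
  rw [show π ^ 2 / 8 = ∑' k : ℕ, 1 / (((2 * k + 1 : ℕ) : ℝ)) ^ 2 by linarith, ← hcast]
  exact hodd.hasSum

-- `Real.arcosh` is defined by the same formula as `arcosh`, so this is the integrand up to `rfl`.
noncomputable def arcoshCoth (x : ℝ) : ℝ := Real.arcosh (cosh x / sinh x)

section ArcoshCoth

variable {x : ℝ}

theorem one_lt_cosh_div_sinh (hx : 0 < x) : 1 < cosh x / sinh x :=
  (one_lt_div (sinh_pos_iff.2 hx)).2 (sinh_lt_cosh x)

theorem sqrt_cosh_div_sinh_sq_sub_one (hx : 0 < x) :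
    √((cosh x / sinh x) ^ 2 - 1) = (sinh x)⁻¹ := by
  have hs := sinh_pos_iff.2 hx
  rw [sqrt_eq_iff_mul_self_eq_of_pos (inv_pos.2 hs)]
  field_simp
  linarith [cosh_sq_sub_sinh_sq x]

theorem arcoshCoth_pos (hx : 0 < x) : 0 < arcoshCoth x :=
  arcosh_pos (one_lt_cosh_div_sinh hx)

theorem cosh_arcoshCoth (hx : 0 < x) : cosh (arcoshCoth x) = cosh x / sinh x :=
  cosh_arcosh (one_lt_cosh_div_sinh hx).le

theorem sinh_arcoshCoth (hx : 0 < x) : sinh (arcoshCoth x) = (sinh x)⁻¹ := by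
  rw [arcoshCoth, sinh_arcosh (one_lt_cosh_div_sinh hx).le, sqrt_cosh_div_sinh_sq_sub_one hx]

theorem arcoshCoth_arcoshCoth (hx : 0 < x) : arcoshCoth (arcoshCoth x) = x := by
  rw [arcoshCoth, cosh_arcoshCoth hx, sinh_arcoshCoth hx, div_inv_eq_mul,
    div_mul_cancel₀ _ (sinh_pos_iff.2 hx).ne', arcosh_cosh hx.le]

theorem strictAntiOn_arcoshCoth : StrictAntiOn arcoshCoth (Ioi 0) := by
  intro u (hu : 0 < u) v (hv : 0 < v) huv
  have hcoth : cosh v / sinh v < cosh u / sinh u := by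
    rw [div_lt_div_iff₀ (sinh_pos_iff.2 hv) (sinh_pos_iff.2 hu)]
    have := sinh_pos_iff.2 (sub_pos.2 huv)
    rw [sinh_sub] at this
    linarith
  exact strictMonoOn_arcosh (zero_lt_one.trans (one_lt_cosh_div_sinh hv))
    (zero_lt_one.trans (one_lt_cosh_div_sinh hu)) hcoth

theorem arcoshCoth_arsinh_one : arcoshCoth (arsinh 1) = arsinh 1 := by
  rw [arcoshCoth, sinh_arsinh, div_one, arcosh_cosh (arsinh_nonneg_iff.2 zero_le_one)]

theorem arcoshCoth_eq_log_sub_log (hx : 0 < x) :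
    arcoshCoth x = log (1 + exp (-x)) - log (1 - exp (-x)) := by
  have hs := sinh_pos_iff.2 hx
  have hlt : exp (-x) < 1 := exp_lt_one_iff.2 (neg_neg_of_pos hx)
  rw [← log_div (by positivity) (sub_pos.2 hlt).ne', arcoshCoth, Real.arcosh,
    sqrt_cosh_div_sinh_sq_sub_one hx]
  congr 1
  rw [inv_eq_one_div, ← add_div, div_eq_div_iff hs.ne' (sub_pos.2 hlt).ne', cosh_eq, sinh_eq]
  have hprod : exp x * exp (-x) = 1 := by rw [← exp_add, add_neg_cancel, exp_zero]
  linear_combination (-1 : ℝ) * hprod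

theorem hasSum_arcoshCoth (hx : 0 < x) :
    HasSum (fun k : ℕ => 2 / (2 * k + 1) * exp (-(2 * k + 1) * x)) (arcoshCoth x) := by
  have habs : |exp (-x)| < 1 := by
    rw [abs_of_pos (exp_pos _)]
    exact exp_lt_one_iff.2 (neg_neg_of_pos hx)
  rw [arcoshCoth_eq_log_sub_log hx]
  convert hasSum_log_sub_log_of_abs_lt_one habs using 2 with k
  rw [← exp_nat_mul]
  push_cast
  ring_nf

end ArcoshCoth

theorem integrableOn_and_integral_arcoshCoth_Ioi_zero :
    IntegrableOn arcoshCoth (Ioi 0) ∧ ∫ x in Ioi 0, arcoshCoth x = π ^ 2 / 4 := by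
  have hexp_neg (k : ℕ) : -(2 * (k : ℝ) + 1) < 0 := neg_neg_of_pos (by positivity)
  refine integrable_and_integral_eq_of_hasSum_of_nonneg
    (F := fun k x => 2 / (2 * k + 1) * exp (-(2 * k + 1) * x))
    (fun k => (integrableOn_exp_mul_Ioi (hexp_neg k) 0).const_mul _)
    (fun k => .of_forall fun x => by positivity)
    ((ae_restrict_iff' measurableSet_Ioi).2 (.of_forall fun x hx => hasSum_arcoshCoth hx)) ?_
  have hterm : (fun k : ℕ => ∫ x in Ioi 0, 2 / (2 * (k : ℝ) + 1) * exp (-(2 * k + 1) * x)) =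
      fun k : ℕ => 2 * (1 / (2 * (k : ℝ) + 1) ^ 2) := by
    ext k
    rw [integral_const_mul, integral_exp_mul_Ioi (hexp_neg k), mul_zero, exp_zero]
    field_simp
  rw [hterm, show π ^ 2 / 4 = 2 * (π ^ 2 / 8) by ring]
  exact hasSum_one_div_odd_sq.mul_left 2

theorem log_one_add_sqrt_two : log (1 + √2) = arsinh 1 := by
  rw [arsinh, one_pow, one_add_one_eq_two]

/-- π² = 4 ln²(1+√2) + 8 ∫_{ln(1+√2)}^∞ arccosh(coth x) dx, where coth x = cosh x/sinh x;
the improper integral converges. -/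
theorem pi_sq_arcosh_coth :
    IntegrableOn (fun x : ℝ => _root_.arcosh (Real.cosh x / Real.sinh x))
      (Set.Ioi (Real.log (1 + Real.sqrt 2))) ∧
    π ^ 2 = 4 * Real.log (1 + Real.sqrt 2) ^ 2
      + 8 * ∫ x in Set.Ioi (Real.log (1 + Real.sqrt 2)),
              _root_.arcosh (Real.cosh x / Real.sinh x) := by
  change IntegrableOn arcoshCoth _ ∧ _ = _ + 8 * ∫ x in _, arcoshCoth x
  obtain ⟨hint, hintegral⟩ := integrableOn_and_integral_arcoshCoth_Ioi_zero
  have ha : 0 < arsinh 1 := arsinh_pos_iff.2 zero_lt_one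
  have hsymm := strictAntiOn_arcoshCoth.setIntegral_Ioi_zero_eq_sq_add_two_mul
    (fun _ hx => arcoshCoth_pos hx) (fun _ hx => arcoshCoth_arcoshCoth hx) ha
    arcoshCoth_arsinh_one hint
  rw [log_one_add_sqrt_two]
  exact ⟨hint.mono_set (Ioi_subset_Ioi ha.le), by linarith⟩
end
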